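/- For every family (τ_α)_{α∈(0,1)} of detection rules in the change-point model satisfying P(τ_α < Γ) ≤ α for all α ∈ (0,1), the probability of a delay of exactly one step decays essentially like α: for every ε > 0 there exists α₀ ∈ (0,1) such that P(τ_α = Γ + 1) ≤ α^{1−ε} for all 0 < α < α₀. (This is the precise upper-bound content of the Appendix Lemma asserting Pr(τ = Γ + 1) ≐ Pr(Γ > τ) = α.) -/

import Mathlib

open MeasureTheory ProbabilityTheory Filter Set

noncomputable section

/-- The change-point probability measure `P = Σ_{k≥1} (1−ρ)^{k−1} ρ · (δ_k ⊗ ν_k)` on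
`ℕ × (ℕ → ℝ)`.  The first coordinate is the change point `Γ` (geometric with parameter `ρ`),
the second coordinate is the observation sequence `(x₁, x₂, …)`, encoded as a function
`ℕ → ℝ` whose `i`-th value (0-based) is the observation `X_{i+1}`. -/
def changePointMeasure (ρ : ℝ) (ν : ℕ → Measure (ℕ → ℝ)) : Measure (ℕ × (ℕ → ℝ)) :=
  Measure.sum fun k : ℕ =>
    (ENNReal.ofReal ((1 - ρ) ^ k * ρ)) • ((Measure.dirac (k + 1)).prod (ν (k + 1)))

/-- `ν k` is the countable product probability measure on sequences `(x₁, x₂, …) ∈ ℝ^ℕ`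
whose `i`-th factor (1-based) is `N(0,σ²)` for `i < k` and `N(A,σ²)` for `i ≥ k`:
each `ν k` is a probability measure whose finite-dimensional marginals are the
corresponding finite Gaussian product measures.  (With 0-based coordinates, the factor of
coordinate `i`, i.e. of observation `X_{i+1}`, is `N(0,σ²)` iff `i + 1 < k`.) -/
def IsChangePointFamily (σ A : ℝ) (ν : ℕ → Measure (ℕ → ℝ)) : Prop :=
  (∀ k, IsProbabilityMeasure (ν k)) ∧
    ∀ k n : ℕ,
      (ν k).map (fun x (i : Fin n) => x i) =
        Measure.pi fun i : Fin n =>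
          if (i : ℕ) + 1 < k then gaussianReal 0 ⟨σ ^ 2, sq_nonneg σ⟩
          else gaussianReal A ⟨σ ^ 2, sq_nonneg σ⟩

/-- A detection rule: a (possibly infinite valued) stopping time `τ` on observation
sequences such that for every `n ≥ 1` the event `{τ = n}` is measurable with respect to
the σ-algebra generated by the first `n` observations `X₁, …, X_n`. -/
def IsDetectionRule (τ : (ℕ → ℝ) → ℕ∞) : Prop :=
  ∀ n : ℕ, 1 ≤ n →
    MeasurableSet[MeasurableSpace.comap (fun x : ℕ → ℝ => fun i : Fin n => x i) inferInstance]
      {x | τ x = (n : ℕ∞)}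

/-!
On `{Γ = k + 1}` the event `{τ = k + 2}` is determined by `X₁, …, X_{k+2}`, whose law differs
from their law on `{Γ = k + 3}`, where the same event is a false alarm, only in the last two
factors. Changing measure costs the Gaussian likelihood ratio of these two observations, which is
at most `M²` unless one of them exceeds the threshold `u` with `M = f₁(u)/f₀(u)`. Summing over `k`
against the geometric weights gives `P(τ = Γ + 1) ≤ M² (1 - ρ)⁻² P(τ < Γ) + 2 N(A,σ²)[u, ∞)`.
Choosing `u` with `M² = α^(-δ)`, a Chernoff bound makes the Gaussian tail `O(α)`, so
`P(τ = Γ + 1) = O(α^(1-δ))`, which is below `α^(1-ε)` for small `α` once `δ < ε`.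
-/

open scoped ENNReal NNReal Finset Topology
open Real

def gaussianLikelihoodRatio (A : ℝ) (v : ℝ≥0) (x : ℝ) : ℝ≥0∞ :=
  ENNReal.ofReal (exp ((2 * A * x - A ^ 2) / (2 * v)))

@[fun_prop]
lemma measurable_gaussianLikelihoodRatio (A : ℝ) (v : ℝ≥0) :
    Measurable (gaussianLikelihoodRatio A v) := by
  unfold gaussianLikelihoodRatio; fun_prop

lemma gaussianLikelihoodRatio_mono {A : ℝ} (hA : 0 ≤ A) (v : ℝ≥0) :
    Monotone (gaussianLikelihoodRatio A v) := fun x y hxy => by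
  unfold gaussianLikelihoodRatio
  gcongr

lemma gaussianReal_eq_withDensity_gaussianLikelihoodRatio (A : ℝ) {v : ℝ≥0} (hv : v ≠ 0) :
    gaussianReal A v = (gaussianReal 0 v).withDensity (gaussianLikelihoodRatio A v) := by
  rw [gaussianReal_of_var_ne_zero _ hv, gaussianReal_of_var_ne_zero _ hv,
    ← withDensity_mul _ (measurable_gaussianPDF _ _) (measurable_gaussianLikelihoodRatio A v)]
  congr 1
  funext x
  rw [Pi.mul_apply, gaussianPDF_def, gaussianPDF_def, gaussianLikelihoodRatio,
    ← ENNReal.ofReal_mul (gaussianPDFReal_nonneg _ _ _)]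
  simp only [gaussianPDFReal, mul_assoc, ← exp_add]
  congr 3
  ring

lemma gaussianReal_Ici_le (μ u : ℝ) (v : ℝ≥0) {t : ℝ} (ht : 0 ≤ t) :
    gaussianReal μ v (Ici u) ≤ ENNReal.ofReal (exp (-t * u + (μ * t + v * t ^ 2 / 2))) := by
  have := measure_ge_le_exp_mul_mgf (X := id) u ht (integrable_exp_mul_gaussianReal t)
    (μ := gaussianReal μ v)
  rw [mgf_id_gaussianReal, ← exp_add] at this
  rw [← ofReal_measureReal]
  exact ENNReal.ofReal_le_ofReal this

lemma withDensity_apply_le_mul_add {α : Type*} [MeasurableSpace α] (μ : Measure α) [SFinite μ]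
    (f : α → ℝ≥0∞) (s : Set α) (c : ℝ≥0∞) :
    μ.withDensity f s ≤ c * μ s + μ.withDensity f {x | c < f x} := by
  have hsplit : s ⊆ (s ∩ {x | f x ≤ c}) ∪ {x | c < f x} := fun x hx => by
    by_cases h : f x ≤ c
    · exact Or.inl ⟨hx, h⟩
    · exact Or.inr (not_le.mp h)
  refine (measure_mono hsplit).trans ((measure_union_le _ _).trans (add_le_add_left ?_ _))
  calc μ.withDensity f (s ∩ {x | f x ≤ c})
      ≤ ∫⁻ _ in s ∩ {x | f x ≤ c}, c ∂μ := by
        rw [withDensity_apply']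
        exact setLIntegral_mono measurable_const fun x hx => hx.2
    _ ≤ c * μ s := by
        rw [setLIntegral_const]
        gcongr
        exact inter_subset_left

lemma pi_withDensity {ι : Type*} [Fintype ι] {α : ι → Type*} [∀ i, MeasurableSpace (α i)]
    (μ : ∀ i, Measure (α i)) [∀ i, IsProbabilityMeasure (μ i)]
    (f : ∀ i, α i → ℝ≥0∞) (hf : ∀ i, Measurable (f i))
    [∀ i, SigmaFinite ((μ i).withDensity (f i))] :
    Measure.pi (fun i => (μ i).withDensity (f i))
      = (Measure.pi μ).withDensity (fun x => ∏ i, f i (x i)) := by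
  refine Measure.pi_eq fun s hs => ?_
  have hindicator : (univ.pi s).indicator (fun x => ∏ i, f i (x i))
      = fun x => ∏ i, (s i).indicator (f i) (x i) := by
    classical
    ext x
    simp only [Set.indicator_apply, Finset.prod_ite_zero, Finset.mem_univ, forall_const,
      mem_univ_pi]
  rw [withDensity_apply _ (MeasurableSet.univ_pi hs), ← lintegral_indicator (.univ_pi hs),
    hindicator, lintegral_prod_eq_prod_lintegral_of_indepFun _ _
      (iIndepFun_pi fun i => ((hf i).indicator (hs i)).aemeasurable)
      fun i => ((hf i).indicator (hs i)).comp (measurable_pi_apply i)]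
  refine Finset.prod_congr rfl fun i _ => ?_
  rw [withDensity_apply _ (hs i), ← lintegral_indicator (hs i),
    ← (measurePreserving_eval μ i).lintegral_comp ((hf i).indicator (hs i))]

lemma pi_ite_apply_le_pow_mul_add {ι α : Type*} [Fintype ι] [MeasurableSpace α]
    (p : ι → Prop) [DecidablePred p] (P₀ P₁ : Measure α) [IsProbabilityMeasure P₀]
    [IsProbabilityMeasure P₁] {f : α → ℝ≥0∞} (hf : Measurable f) (hP₁ : P₁ = P₀.withDensity f)
    (s : Set (ι → α)) (c : ℝ≥0∞) :
    Measure.pi (fun i => if p i then P₀ else P₁) s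
      ≤ c ^ #{i | ¬ p i} * Measure.pi (fun _ => P₀) s + #{i | ¬ p i} * P₁ {x | c < f x} := by
  set g : ι → α → ℝ≥0∞ := fun i => if p i then 1 else f
  have hfactor (i : ι) : (if p i then P₀ else P₁) = P₀.withDensity (g i) := by
    by_cases h : p i <;> simp [g, h, hP₁]
  have : ∀ i, IsProbabilityMeasure (if p i then P₀ else P₁) := fun i => by
    split <;> infer_instance
  have : ∀ i, SigmaFinite (P₀.withDensity (g i)) := fun i => by
    rw [← hfactor]; infer_instance
  have hdensity : Measure.pi (fun i => if p i then P₀ else P₁)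
      = (Measure.pi fun _ => P₀).withDensity fun x => ∏ i ∈ {i | ¬ p i}, f (x i) := by
    have hg (i : ι) : Measurable (g i) := by by_cases h : p i <;> simp [g, h, hf, measurable_one]
    rw [funext hfactor, pi_withDensity _ _ hg]
    congr with x
    rw [Finset.prod_filter]
    exact Finset.prod_congr rfl fun i _ => by by_cases h : p i <;> simp [g, h]
  have htail : {x : ι → α | c ^ #{i | ¬ p i} < ∏ i ∈ {i | ¬ p i}, f (x i)}
      ⊆ ⋃ i ∈ ({i | ¬ p i} : Finset ι), {x | c < f (x i)} := fun x hx => by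
    by_contra h
    simp only [mem_iUnion, not_exists] at h
    exact (Finset.prod_le_pow_card _ (fun i => f (x i)) c fun i hi => not_lt.mp (h i hi)).not_gt hx
  calc Measure.pi (fun i => if p i then P₀ else P₁) s
      ≤ c ^ #{i | ¬ p i} * Measure.pi (fun _ => P₀) s
        + Measure.pi (fun i => if p i then P₀ else P₁)
          {x | c ^ #{i | ¬ p i} < ∏ i ∈ {i | ¬ p i}, f (x i)} := by
        rw [hdensity]; exact withDensity_apply_le_mul_add _ _ _ _
    _ ≤ c ^ #{i | ¬ p i} * Measure.pi (fun _ => P₀) s + #{i | ¬ p i} * P₁ {x | c < f x} := by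
        gcongr
        refine (measure_mono htail).trans ((measure_biUnion_finset_le _ _).trans ?_)
        rw [← nsmul_eq_mul, ← Finset.sum_const]
        refine Finset.sum_le_sum fun i hi => le_of_eq ?_
        rw [Finset.mem_filter] at hi
        have := (measurePreserving_eval (fun i => if p i then P₀ else P₁) i).measure_preimage
          (measurableSet_lt measurable_const hf : MeasurableSet {x | c < f x}).nullMeasurableSet
        rwa [if_neg hi.2] at this

section ChangePoint

variable {ρ : ℝ} {ν : ℕ → Measure (ℕ → ℝ)} [∀ k, SigmaFinite (ν k)] {τ : (ℕ → ℝ) → ℕ∞}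

lemma le_changePointMeasure_apply (E : Set (ℕ × (ℕ → ℝ))) :
    ∑' k : ℕ, ENNReal.ofReal ((1 - ρ) ^ k * ρ) * ν (k + 1) (Prod.mk (k + 1) ⁻¹' E)
      ≤ changePointMeasure ρ ν E := by
  refine (ENNReal.tsum_le_tsum fun k => ?_).trans (Measure.le_sum_apply _ E)
  rw [Measure.smul_apply, smul_eq_mul, Measure.dirac_prod]
  gcongr
  exact Measure.le_map_apply measurable_prodMk_left.aemeasurable E

lemma changePointMeasure_apply {E : Set (ℕ × (ℕ → ℝ))} (hE : MeasurableSet E) :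
    changePointMeasure ρ ν E
      = ∑' k : ℕ, ENNReal.ofReal ((1 - ρ) ^ k * ρ) * ν (k + 1) (Prod.mk (k + 1) ⁻¹' E) := by
  rw [changePointMeasure, Measure.sum_apply _ hE]
  congr with k
  rw [Measure.smul_apply, smul_eq_mul, Measure.dirac_prod,
    Measure.map_apply measurable_prodMk_left hE]

lemma tsum_ofReal_geometric_mul (hρ : ρ ∈ Ioc (0 : ℝ) 1) :
    ∑' k : ℕ, ENNReal.ofReal ((1 - ρ) ^ k * ρ) = 1 := by
  have hρ' : 0 ≤ 1 - ρ := sub_nonneg.2 hρ.2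
  simp_rw [ENNReal.ofReal_mul (pow_nonneg hρ' _), ENNReal.ofReal_pow hρ']
  rw [ENNReal.tsum_mul_right, ENNReal.tsum_geometric, ← ENNReal.ofReal_one,
    ← ENNReal.ofReal_sub _ hρ', sub_sub_cancel, ENNReal.ofReal_one]
  exact ENNReal.inv_mul_cancel (ENNReal.ofReal_pos.2 hρ.1).ne' ENNReal.ofReal_ne_top

lemma IsDetectionRule.measurableSet_eq (hτ : IsDetectionRule τ) {n : ℕ}
    (hn : 1 ≤ n) : MeasurableSet {x | τ x = (n : ℕ∞)} :=
  Measurable.comap_le (by fun_prop) _ (hτ n hn)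

lemma IsDetectionRule.measurableSet_delay_one (hτ : IsDetectionRule τ) :
    MeasurableSet {ω : ℕ × (ℕ → ℝ) | τ ω.2 = ((ω.1 + 1 : ℕ) : ℕ∞)} := by
  have : {ω : ℕ × (ℕ → ℝ) | τ ω.2 = ((ω.1 + 1 : ℕ) : ℕ∞)}
      = ⋃ n : ℕ, {n} ×ˢ {x | τ x = ((n + 1 : ℕ) : ℕ∞)} := by
    ext ⟨n, x⟩; simp
  rw [this]
  exact .iUnion fun n => (measurableSet_singleton n).prod (hτ.measurableSet_eq (by omega))

lemma changePointMeasure_delay_one_le (hρ : ρ ∈ Ioo (0 : ℝ) 1) (hτ : IsDetectionRule τ)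
    (c d : ℝ≥0∞)
    (hcd : ∀ k : ℕ, ν (k + 1) {x | τ x = ((k + 2 : ℕ) : ℕ∞)}
      ≤ c * ν (k + 3) {x | τ x = ((k + 2 : ℕ) : ℕ∞)} + d) :
    changePointMeasure ρ ν {ω | τ ω.2 = ((ω.1 + 1 : ℕ) : ℕ∞)}
      ≤ c * ENNReal.ofReal ((1 - ρ)⁻¹ ^ 2) * changePointMeasure ρ ν {ω | τ ω.2 < (ω.1 : ℕ∞)}
        + d := by
  set w : ℕ → ℝ≥0∞ := fun k => ENNReal.ofReal ((1 - ρ) ^ k * ρ)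
  set B : ℕ → Set (ℕ → ℝ) := fun k => {x | τ x = ((k + 2 : ℕ) : ℕ∞)}
  have hw (k : ℕ) : w k = ENNReal.ofReal ((1 - ρ)⁻¹ ^ 2) * w (k + 2) := by
    have : 1 - ρ ≠ 0 := sub_ne_zero.2 hρ.2.ne'
    simp only [w, ← ENNReal.ofReal_mul (by positivity : (0 : ℝ) ≤ (1 - ρ)⁻¹ ^ 2)]
    congr 1
    field_simp
    ring
  have hfalse : ∑' k, w (k + 2) * ν (k + 3) (B k)
      ≤ changePointMeasure ρ ν {ω | τ ω.2 < (ω.1 : ℕ∞)} := by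
    refine le_trans ?_ ((ENNReal.tsum_comp_le_tsum_of_injective (add_left_injective 2) _).trans
      (le_changePointMeasure_apply _))
    refine ENNReal.tsum_le_tsum fun k => ?_
    gcongr
    intro x (hx : τ x = ((k + 2 : ℕ) : ℕ∞))
    show τ x < ((k + 2 + 1 : ℕ) : ℕ∞)
    rw [hx]
    exact_mod_cast Nat.lt_succ_self _
  calc changePointMeasure ρ ν {ω | τ ω.2 = ((ω.1 + 1 : ℕ) : ℕ∞)}
      = ∑' k, w k * ν (k + 1) (B k) := changePointMeasure_apply hτ.measurableSet_delay_one
    _ ≤ ∑' k, (c * ENNReal.ofReal ((1 - ρ)⁻¹ ^ 2) * (w (k + 2) * ν (k + 3) (B k)) + w k * d) :=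
        ENNReal.tsum_le_tsum fun k => by
          calc w k * ν (k + 1) (B k) ≤ w k * (c * ν (k + 3) (B k) + d) := by gcongr; exact hcd k
            _ = _ := by rw [mul_add, hw k]; ring
    _ = c * ENNReal.ofReal ((1 - ρ)⁻¹ ^ 2) * ∑' k, w (k + 2) * ν (k + 3) (B k)
          + (∑' k, w k) * d := by
        rw [ENNReal.tsum_add, ENNReal.tsum_mul_left, ENNReal.tsum_mul_right]
    _ ≤ _ := by
        rw [tsum_ofReal_geometric_mul ⟨hρ.1, hρ.2.le⟩, one_mul]
        gcongr

end ChangePoint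

lemma card_filter_not_succ_lt (k : ℕ) : #{i : Fin (k + 2) | ¬ (i : ℕ) + 1 < k + 1} = 2 := by
  rw [Finset.card_eq_two]
  refine ⟨⟨k, by omega⟩, ⟨k + 1, by omega⟩, by simp [Fin.ext_iff], ?_⟩
  ext i
  simp only [Finset.mem_filter, Finset.mem_univ, true_and, Finset.mem_insert,
    Finset.mem_singleton, Fin.ext_iff]
  omega

lemma IsChangePointFamily.apply_le_mul_add {σ A : ℝ} {ν : ℕ → Measure (ℕ → ℝ)}
    (hν : IsChangePointFamily σ A ν) (hσ : σ ≠ 0) (hA : 0 ≤ A) (k : ℕ) {E : Set (ℕ → ℝ)}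
    (hE : MeasurableSet[MeasurableSpace.comap (fun x : ℕ → ℝ => fun i : Fin (k + 2) => x i)
      inferInstance] E) (u : ℝ) :
    ν (k + 1) E ≤ gaussianLikelihoodRatio A ⟨σ ^ 2, sq_nonneg σ⟩ u ^ 2 * ν (k + 3) E
      + 2 * gaussianReal A ⟨σ ^ 2, sq_nonneg σ⟩ (Ici u) := by
  set v : ℝ≥0 := ⟨σ ^ 2, sq_nonneg σ⟩
  have hv : v ≠ 0 := by rw [Ne, ← NNReal.coe_eq_zero]; exact pow_ne_zero 2 hσ
  obtain ⟨S, hS, rfl⟩ := MeasurableSpace.measurableSet_comap.mp hE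
  have hproj : Measurable fun x : ℕ → ℝ => fun i : Fin (k + 2) => x i := by fun_prop
  rw [← Measure.map_apply hproj hS, ← Measure.map_apply hproj hS, hν.2, hν.2]
  have hnull : (fun i : Fin (k + 2) => if (i : ℕ) + 1 < k + 3 then gaussianReal 0 v
      else gaussianReal A v) = fun _ => gaussianReal 0 v :=
    funext fun i => if_pos (by omega)
  rw [hnull]
  refine (pi_ite_apply_le_pow_mul_add _ _ _ (measurable_gaussianLikelihoodRatio A v)
    (gaussianReal_eq_withDensity_gaussianLikelihoodRatio A hv) S
    (gaussianLikelihoodRatio A v u)).trans ?_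
  rw [card_filter_not_succ_lt k]
  gcongr
  · norm_num
  · exact fun x hx => ((gaussianLikelihoodRatio_mono hA v).reflect_lt hx).le

theorem exists_delay_one_le_mul_rpow {σ A ρ : ℝ} (hσ : σ ≠ 0) (hA : 0 < A)
    (hρ : ρ ∈ Ioo (0 : ℝ) 1) {ν : ℕ → Measure (ℕ → ℝ)} (hν : IsChangePointFamily σ A ν)
    {δ : ℝ} (hδ : 0 < δ) :
    ∃ C : ℝ, ∀ τ : (ℕ → ℝ) → ℕ∞, IsDetectionRule τ → ∀ α ∈ Ioc (0 : ℝ) 1,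
      changePointMeasure ρ ν {ω | τ ω.2 < (ω.1 : ℕ∞)} ≤ ENNReal.ofReal α →
      changePointMeasure ρ ν {ω | τ ω.2 = ((ω.1 + 1 : ℕ) : ℕ∞)}
        ≤ ENNReal.ofReal (C * α ^ (1 - δ)) := by
  have := hν.1
  set v : ℝ≥0 := ⟨σ ^ 2, sq_nonneg σ⟩
  have hv : (v : ℝ) = σ ^ 2 := rfl
  have hσ2 : 0 < σ ^ 2 := by positivity
  set t := 2 * A / (δ * σ ^ 2)
  set K := A * t / 2 + σ ^ 2 * t ^ 2 / 2
  refine ⟨(1 - ρ)⁻¹ ^ 2 + 2 * exp K, fun τ hτ α ⟨hα₀, hα₁⟩ hFA => ?_⟩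
  set u := (A ^ 2 - δ * σ ^ 2 * log α) / (2 * A)
  have hratio : gaussianLikelihoodRatio A v u ^ 2 = ENNReal.ofReal (α ^ (-δ)) := by
    rw [gaussianLikelihoodRatio, ← ENNReal.ofReal_pow (exp_pos _).le, ← exp_nat_mul,
      rpow_def_of_pos hα₀, hv]
    congr 2
    simp only [u]
    field_simp
    ring
  have htail : gaussianReal A v (Ici u) ≤ ENNReal.ofReal (exp K * α) := by
    refine (gaussianReal_Ici_le A u v (by positivity : 0 ≤ t)).trans_eq ?_
    rw [← exp_log hα₀, ← exp_add, hv]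
    congr 2
    simp only [u, K, t]
    field_simp
    ring
  calc changePointMeasure ρ ν {ω | τ ω.2 = ((ω.1 + 1 : ℕ) : ℕ∞)}
      ≤ gaussianLikelihoodRatio A v u ^ 2 * ENNReal.ofReal ((1 - ρ)⁻¹ ^ 2)
          * changePointMeasure ρ ν {ω | τ ω.2 < (ω.1 : ℕ∞)} + 2 * gaussianReal A v (Ici u) :=
        changePointMeasure_delay_one_le hρ hτ _ _ fun k =>
          hν.apply_le_mul_add hσ hA.le k (hτ (k + 2) (by omega)) u
    _ ≤ ENNReal.ofReal (α ^ (-δ)) * ENNReal.ofReal ((1 - ρ)⁻¹ ^ 2) * ENNReal.ofReal α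
          + 2 * ENNReal.ofReal (exp K * α) := by
        rw [hratio]
        gcongr
    _ = ENNReal.ofReal ((1 - ρ)⁻¹ ^ 2 * α ^ (1 - δ) + 2 * (exp K * α)) := by
        rw [← ENNReal.ofReal_mul (by positivity), ← ENNReal.ofReal_mul (by positivity),
          ← ENNReal.ofReal_ofNat 2, ← ENNReal.ofReal_mul zero_le_two,
          ← ENNReal.ofReal_add (by positivity) (by positivity), rpow_sub hα₀, rpow_one,
          rpow_neg hα₀.le]
        congr 2
        field_simp
    _ ≤ ENNReal.ofReal (((1 - ρ)⁻¹ ^ 2 + 2 * exp K) * α ^ (1 - δ)) := by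
        have : α ≤ α ^ (1 - δ) := self_le_rpow_of_le_one hα₀.le hα₁ (by linarith)
        gcongr
        nlinarith [exp_pos K]

lemma eventually_mul_rpow_le_rpow (C : ℝ) {a b : ℝ} (hab : b < a) :
    ∀ᶠ α in 𝓝[>] (0 : ℝ), C * α ^ a ≤ α ^ b := by
  have hlim : Tendsto (fun α : ℝ => α ^ (a - b)) (𝓝[>] 0) (𝓝 0) := by
    have := (continuousAt_rpow_const 0 (a - b) (Or.inr (sub_pos.2 hab).le)).tendsto
    rw [zero_rpow (sub_pos.2 hab).ne'] at this
    exact this.mono_left nhdsWithin_le_nhds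
  have hM : 0 < max C 1 := lt_max_of_lt_right one_pos
  filter_upwards [self_mem_nhdsWithin, hlim.eventually (gt_mem_nhds (inv_pos.2 hM))]
    with α (hα : 0 < α) hsmall
  calc C * α ^ a = C * α ^ (a - b) * α ^ b := by rw [mul_assoc, ← rpow_add hα, sub_add_cancel]
    _ ≤ max C 1 * α ^ (a - b) * α ^ b := by gcongr; exact le_max_left _ _
    _ ≤ 1 * α ^ b := by
        gcongr
        exact (mul_le_mul_of_nonneg_left hsmall.le hM.le).trans_eq (mul_inv_cancel₀ hM.ne')
    _ = α ^ b := one_mul _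

lemma exists_Ioo_of_eventually_nhdsGT {p : ℝ → Prop} (h : ∀ᶠ α in 𝓝[>] (0 : ℝ), p α) :
    ∃ α₀ ∈ Ioo (0 : ℝ) 1, ∀ α : ℝ, 0 < α → α < α₀ → p α := by
  obtain ⟨u, hu, hsub⟩ := mem_nhdsGT_iff_exists_Ioo_subset.mp h
  exact ⟨min u (1 / 2), ⟨lt_min hu (by norm_num), (min_le_right _ _).trans_lt (by norm_num)⟩,
    fun α h₀ h₁ => hsub ⟨h₀, h₁.trans_le (min_le_left _ _)⟩⟩

/-- for any family of detection rules with false-alarm probability at most `α`,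
the probability of a delay of exactly one step decays essentially like `α`: for every `ε > 0`
there is `α₀ ∈ (0,1)` with `P(τ_α = Γ + 1) ≤ α^{1−ε}` for all `0 < α < α₀`. -/
theorem detection_delay_one_prob_le_rpow
    (σ A ρ : ℝ) (hσ : 0 < σ) (hA : 0 < A) (hρ : ρ ∈ Set.Ioo (0 : ℝ) 1)
    (ν : ℕ → Measure (ℕ → ℝ)) (hν : IsChangePointFamily σ A ν)
    (τ : ℝ → (ℕ → ℝ) → ℕ∞)
    (hτ : ∀ α ∈ Set.Ioo (0 : ℝ) 1, IsDetectionRule (τ α))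
    (hFA : ∀ α ∈ Set.Ioo (0 : ℝ) 1,
      changePointMeasure ρ ν {ω | τ α ω.2 < (ω.1 : ℕ∞)} ≤ ENNReal.ofReal α) :
    ∀ ε > (0 : ℝ), ∃ α₀ ∈ Set.Ioo (0 : ℝ) 1, ∀ α : ℝ, 0 < α → α < α₀ →
      changePointMeasure ρ ν {ω | τ α ω.2 = ((ω.1 + 1 : ℕ) : ℕ∞)}
        ≤ ENNReal.ofReal (α ^ (1 - ε)) := by
  intro ε hε
  obtain ⟨C, hC⟩ := exists_delay_one_le_mul_rpow hσ.ne' hA hρ hν (half_pos hε)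
  refine exists_Ioo_of_eventually_nhdsGT ?_
  filter_upwards [Ioo_mem_nhdsGT one_pos,
    eventually_mul_rpow_le_rpow C (by linarith : 1 - ε < 1 - ε / 2)] with α hα hrate
  exact (hC (τ α) (hτ α hα) α ⟨hα.1, hα.2.le⟩ (hFA α hα)).trans (ENNReal.ofReal_le_ofReal hrate)
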